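/- arXiv:2106.11590 — 2 statements merged into one kernel-verified Lean document; each statement's English description precedes it below -/
import Mathlib

section
/- Let d be an integer, n ≥ 1, and ε a complex number with complex conjugate ε̄. Consider the block-diagonal complex matrix B_M consisting of: one n×n tridiagonal block with diagonal entries -2d and off-diagonal entries d; n(n-1)/2 copies of the 2×2 block [[-2εε̄, -(ε+ε̄)], [-(ε+ε̄), -2]]; and n copies of the 2×2 block [[4εε̄, 2(ε+ε̄)], [2(ε+ε̄), 4]]. Then det B_M = (-d)^n · (n+1) · 4^n · (4εε̄ - (ε+ε̄)²)^{n(n+1)/2}. -/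
/-!
The determinant of a block-diagonal matrix is the product of the determinants of its blocks.
Laplace expansion along the first row, then along the first column of the second minor, gives
the three-term recurrence `Δₙ₊₂ = a Δₙ₊₁ - b² Δₙ` for the tridiagonal Toeplitz matrices with
diagonal `a` and off-diagonal `b`; for `a = -2d`, `b = d` its solution is `(-d)ⁿ (n + 1)`.
Each `2 × 2` block has determinant `D = 4εε̄ - (ε + ε̄)²`, or `4D` for the last `n` blocks,
and `n(n-1)/2 + n = n(n+1)/2`.
-/

open Matrix

/-- Sizes of the blocks: one block of size `n` and `k + n` blocks of size `2`. -/
def blkSize (n k : ℕ) : Fin 1 ⊕ Fin k ⊕ Fin n → Type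
  | Sum.inl _ => Fin n
  | Sum.inr _ => Fin 2

instance blkSizeFintype (n k : ℕ) : ∀ i, Fintype (blkSize n k i)
  | Sum.inl _ => inferInstanceAs (Fintype (Fin n))
  | Sum.inr _ => inferInstanceAs (Fintype (Fin 2))

instance blkSizeDecEq (n k : ℕ) : ∀ i, DecidableEq (blkSize n k i)
  | Sum.inl _ => inferInstanceAs (DecidableEq (Fin n))
  | Sum.inr _ => inferInstanceAs (DecidableEq (Fin 2))

/-- The blocks of the Gram matrix `B_M`: one `n × n` tridiagonal block with diagonal
entries `-2d` and off-diagonal entries `d`; `n(n-1)/2` copies of the block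
`[[-2εε̄, -(ε+ε̄)], [-(ε+ε̄), -2]]`; and `n` copies of `[[4εε̄, 2(ε+ε̄)], [2(ε+ε̄), 4]]`. -/
noncomputable def BMblocks (d : ℤ) (n : ℕ) (ε : ℂ) :
    (i : Fin 1 ⊕ Fin (n * (n - 1) / 2) ⊕ Fin n) →
      Matrix (blkSize n (n * (n - 1) / 2) i) (blkSize n (n * (n - 1) / 2) i) ℂ
  | Sum.inl _ => Matrix.of fun i j : Fin n =>
      if i = j then -2 * (d : ℂ)
      else if (i : ℕ) + 1 = (j : ℕ) ∨ (j : ℕ) + 1 = (i : ℕ) then (d : ℂ)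
      else 0
  | Sum.inr (Sum.inl _) =>
      !![-2 * ε * (starRingEnd ℂ) ε, -(ε + (starRingEnd ℂ) ε);
         -(ε + (starRingEnd ℂ) ε), -2]
  | Sum.inr (Sum.inr _) =>
      !![4 * ε * (starRingEnd ℂ) ε, 2 * (ε + (starRingEnd ℂ) ε);
         2 * (ε + (starRingEnd ℂ) ε), 4]

namespace Matrix

variable {R : Type*} [CommRing R]

theorem det_blockDiagonal' {o : Type*} [Fintype o] [DecidableEq o]
    {m : o → Type*} [∀ i, Fintype (m i)] [∀ i, DecidableEq (m i)] (M : ∀ i, Matrix (m i) (m i) R) :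
    (blockDiagonal' M).det = ∏ i, (M i).det := by
  let _ : LinearOrder o := LinearOrder.lift' (Fintype.equivFin o) (Equiv.injective _)
  rw [(blockTriangular_blockDiagonal' M).det_fintype]
  refine Finset.prod_congr rfl fun a _ => ?_
  rw [← det_submatrix_equiv_self (Equiv.sigmaSubtype a).symm]
  congr 1
  ext x y
  exact blockDiagonal'_apply_eq M a x y

theorem det_succ_eq_mul_det_of_col_zero {n : ℕ} (A : Matrix (Fin (n + 1)) (Fin (n + 1)) R)
    (h : ∀ i : Fin n, A i.succ 0 = 0) : A.det = A 0 0 * (A.submatrix Fin.succ Fin.succ).det := by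
  rw [det_succ_column_zero, Fin.sum_univ_succ]
  simp [h]

def tridiagonal (a b : R) (n : ℕ) : Matrix (Fin n) (Fin n) R :=
  of fun i j => if i = j then a else if (i : ℕ) + 1 = j ∨ (j : ℕ) + 1 = i then b else 0

variable (a b : R)

theorem tridiagonal_submatrix_succ (n : ℕ) :
    (tridiagonal a b (n + 1)).submatrix Fin.succ Fin.succ = tridiagonal a b n := by
  ext i j
  simp [tridiagonal, Fin.ext_iff]

theorem det_tridiagonal_succ_succ (n : ℕ) :
    (tridiagonal a b (n + 2)).det
      = a * (tridiagonal a b (n + 1)).det - b ^ 2 * (tridiagonal a b n).det := by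
  have minor_one : ((tridiagonal a b (n + 2)).submatrix Fin.succ (Fin.succAbove 1)).det
      = b * (tridiagonal a b n).det := by
    rw [det_succ_eq_mul_det_of_col_zero]
    · have corner : ((tridiagonal a b (n + 2)).submatrix Fin.succ (Fin.succAbove 1)).submatrix
          Fin.succ Fin.succ = tridiagonal a b n := by
        ext i j
        rw [← Fin.succ_zero_eq_one]
        simp [tridiagonal, Fin.ext_iff]
      rw [corner]
      simp [tridiagonal]
    · intro i
      simp [tridiagonal, Fin.ext_iff]
  rw [det_succ_row_zero, Fin.sum_univ_succ, Fin.sum_univ_succ, Fintype.sum_eq_zero]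
  · simp only [Fin.succ_zero_eq_one, minor_one, Fin.succAbove_zero, tridiagonal_submatrix_succ]
    simp [tridiagonal]
    ring
  · intro j
    simp [tridiagonal, Fin.ext_iff]

theorem det_tridiagonal_neg_two_mul (c : R) :
    ∀ n : ℕ, (tridiagonal (-2 * c) c n).det = (-c) ^ n * (n + 1)
  | 0 => by simp
  | 1 => by simp [tridiagonal]; ring
  | n + 2 => by
    rw [det_tridiagonal_succ_succ, det_tridiagonal_neg_two_mul c (n + 1),
      det_tridiagonal_neg_two_mul c n]
    push_cast
    ring

end Matrix

theorem det_BM_general (d : ℤ) (n : ℕ) (ε : ℂ) :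
    (Matrix.blockDiagonal' (BMblocks d n ε)).det
      = (-(d : ℂ)) ^ n * (n + 1) * 4 ^ n *
        (4 * ε * (starRingEnd ℂ) ε - (ε + (starRingEnd ℂ) ε) ^ 2) ^ (n * (n + 1) / 2) := by
  set D := 4 * ε * (starRingEnd ℂ) ε - (ε + (starRingEnd ℂ) ε) ^ 2
  have det_tridiagonal_block : ∀ i, (BMblocks d n ε (Sum.inl i)).det = (-(d : ℂ)) ^ n * (n + 1) :=
    fun _ => det_tridiagonal_neg_two_mul _ n
  have det_middle_block : ∀ i, (BMblocks d n ε (Sum.inr (Sum.inl i))).det = D :=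
    fun _ => (det_fin_two_of _ _ _ _).trans (by ring)
  have det_last_block : ∀ i, (BMblocks d n ε (Sum.inr (Sum.inr i))).det = 4 * D :=
    fun _ => (det_fin_two_of _ _ _ _).trans (by ring)
  have card_blocks : n * (n - 1) / 2 + n = n * (n + 1) / 2 := by
    simpa [Nat.mul_comm] using (Nat.triangle_succ n).symm
  rw [det_blockDiagonal', Fintype.prod_sum_type, Fintype.prod_sum_type]
  simp only [det_tridiagonal_block, det_middle_block, det_last_block, Finset.prod_const,
    Finset.card_univ, Fintype.card_fin, pow_one]
  rw [← card_blocks, pow_add]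
  clear_value D
  ring

/-- The determinant of the block-diagonal Gram matrix `B_M` equals
`(-d)^n · (n+1) · 4^n · (4εε̄ - (ε+ε̄)²)^{n(n+1)/2}`. -/
theorem det_BM (d : ℤ) (n : ℕ) (hn : 1 ≤ n) (ε : ℂ) :
    (Matrix.blockDiagonal' (BMblocks d n ε)).det
      = (-(d : ℂ)) ^ n * (n + 1) * 4 ^ n *
        (4 * ε * (starRingEnd ℂ) ε - (ε + (starRingEnd ℂ) ε) ^ 2) ^ (n * (n + 1) / 2) :=
  det_BM_general d n ε
end

section
/- Let d be a positive odd squarefree integer, n ≥ 1, p an odd prime with p ∣ d, and k ≥ 1. Let R = ℤ[√-d]/(p^k) with σ the ring endomorphism induced by conjugation, and let L = diag(1,…,1,-1) of size n+1. Then the number of matrices A ∈ M_{n+1}(R) with A·L·σ(A)ᵀ = L equals 2p^k times the number of such matrices that in addition satisfy det A = 1. -/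
/-!
Since `σ(det A) = (det A)⁻¹` for `A ∈ U(L)`, the map
`A ↦ (det A, diag(1, …, 1, σ(det A)) · A)` is a bijection from `U(L)` onto
`{s | s σ(s) = 1} × SU(L)`, so the index is the number of norm-one elements of
`ℤ[√-d]/(p^k) ≅ (ZMod p^k)[ω]`, `ω² = -d`. As `p ∣ d` and `p` is odd, `ZMod p^k` is local
with `-d` in its maximal ideal and `2` a unit; then every norm-one element is `≡ ±1` modulo
`p`, and those `≡ 1` are exactly the Cayley transforms `(1 + tω)/(1 - tω)`, `t ∈ ZMod p^k`.
-/

open Matrix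

/-- The quotient ring `ℤ[√-d]/(m)`. -/
abbrev Rq (d m : ℤ) : Type := Zsqrtd (-d) ⧸ Ideal.span {(m : Zsqrtd (-d))}

/-- Conjugation `a + b√-d ↦ a - b√-d` descends to the quotient `ℤ[√-d]/(m)`. -/
noncomputable def conjQ (d m : ℤ) : Rq d m →+* Rq d m :=
  Ideal.quotientMap (Ideal.span {(m : Zsqrtd (-d))}) (starRingEnd (Zsqrtd (-d)))
    (by
      rw [Ideal.span_singleton_le_iff_mem, Ideal.mem_comap, map_intCast]
      exact Ideal.mem_span_singleton_self _)

/-- The diagonal matrix `diag(1, …, 1, -1)` of size `n+1`. -/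
def Lmat (R : Type*) [Ring R] (n : ℕ) : Matrix (Fin (n + 1)) (Fin (n + 1)) R :=
  Matrix.diagonal fun i => if i = Fin.last n then -1 else 1

open IsLocalRing

section UnitaryGroup

variable {R : Type*} [CommRing R] (σ : R →+* R) {ι : Type*} [Fintype ι] [DecidableEq ι]

theorem det_mul_map_det_eq_one {L A : Matrix ι ι R} (hL : IsUnit L.det)
    (hA : A * L * (A.map σ)ᵀ = L) : A.det * σ A.det = 1 := by
  have h := congrArg det hA
  rw [det_mul, det_mul, det_transpose, ← RingHom.mapMatrix_apply, ← RingHom.map_det] at h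
  exact hL.mul_left_cancel (by linear_combination h)

theorem diagonal_mulSingle_mul_diagonal_mulSingle (i : ι) (s t : R) :
    diagonal (Pi.mulSingle i s) * diagonal (Pi.mulSingle i t) =
      diagonal (Pi.mulSingle i (s * t)) := by
  rw [diagonal_mul_diagonal, Pi.mulSingle_mul]
  rfl

theorem diagonal_mulSingle_mul_mul_diagonal_mulSingle {L : Matrix ι ι R} (hL : L.IsDiag)
    (i : ι) {s t : R} (hst : s * t = 1) :
    diagonal (Pi.mulSingle i s) * L * diagonal (Pi.mulSingle i t) = L := by
  rw [← hL.diagonal_diag, diagonal_mul_diagonal, diagonal_mul_diagonal]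
  congr 1
  ext j
  rcases eq_or_ne j i with rfl | hj
  · simp only [Pi.mulSingle_eq_same]
    linear_combination L.diag j * hst
  · simp [Pi.mulSingle_eq_of_ne hj]

theorem diagonal_mulSingle_mul_mem_unitary {L : Matrix ι ι R} (hL : L.IsDiag) (i : ι) {s : R}
    (hs : s * σ s = 1) {A : Matrix ι ι R} (hA : A * L * (A.map σ)ᵀ = L) :
    diagonal (Pi.mulSingle i s) * A * L * ((diagonal (Pi.mulSingle i s) * A).map σ)ᵀ = L := by
  have hmap : (fun j => σ ((Pi.mulSingle i s : ι → R) j)) = Pi.mulSingle i (σ s) := by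
    ext j
    exact Pi.apply_mulSingle (fun _ => σ) (fun _ => map_one σ) i s j
  rw [Matrix.map_mul, diagonal_map (map_zero σ), transpose_mul, diagonal_transpose, hmap]
  calc _ = diagonal (Pi.mulSingle i s) * (A * L * (A.map σ)ᵀ) *
        diagonal (Pi.mulSingle i (σ s)) := by simp only [Matrix.mul_assoc]
    _ = L := by rw [hA, diagonal_mulSingle_mul_mul_diagonal_mulSingle hL i hs]

def unitaryEquivNormOneProdSpecial {L : Matrix ι ι R} (hL : L.IsDiag) (hdet : IsUnit L.det)
    (i : ι) :
    {A : Matrix ι ι R // A * L * (A.map σ)ᵀ = L} ≃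
      {s : R // s * σ s = 1} ×
        {A : Matrix ι ι R // A * L * (A.map σ)ᵀ = L ∧ A.det = 1} where
  toFun A :=
    have hA := det_mul_map_det_eq_one σ hdet A.2
    (⟨A.1.det, hA⟩,
     ⟨diagonal (Pi.mulSingle i (σ A.1.det)) * A.1,
      diagonal_mulSingle_mul_mem_unitary σ hL i (by rw [← map_mul, hA, map_one]) A.2,
      by rw [det_mul, det_diagonal, Finset.prod_pi_mulSingle', if_pos (Finset.mem_univ i),
        mul_comm, hA]⟩)
  invFun sB := ⟨diagonal (Pi.mulSingle i sB.1.1) * sB.2.1,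
    diagonal_mulSingle_mul_mem_unitary σ hL i sB.1.2 sB.2.2.1⟩
  left_inv A := by
    ext1
    dsimp only
    rw [← Matrix.mul_assoc, diagonal_mulSingle_mul_diagonal_mulSingle,
      det_mul_map_det_eq_one σ hdet A.2, Pi.mulSingle_one, diagonal_one', Matrix.one_mul]
  right_inv := by
    rintro ⟨⟨s, hs⟩, ⟨B, -, hdetB⟩⟩
    have hdet : (diagonal (Pi.mulSingle i s) * B).det = s := by
      rw [det_mul, det_diagonal, Finset.prod_pi_mulSingle', if_pos (Finset.mem_univ i), hdetB,
        mul_one]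
    ext1
    · exact Subtype.ext hdet
    · refine Subtype.ext ?_
      dsimp only
      rw [hdet, ← Matrix.mul_assoc, diagonal_mulSingle_mul_diagonal_mulSingle, mul_comm, hs,
        Pi.mulSingle_one, diagonal_one', Matrix.one_mul]

theorem card_unitary_eq_card_normOne_mul_card_special [Nonempty ι] {L : Matrix ι ι R}
    (hL : L.IsDiag) (hdet : IsUnit L.det) :
    Nat.card {A : Matrix ι ι R // A * L * (A.map σ)ᵀ = L} =
      Nat.card {s : R // s * σ s = 1} *
        Nat.card {A : Matrix ι ι R // A * L * (A.map σ)ᵀ = L ∧ A.det = 1} := by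
  rw [Nat.card_congr (unitaryEquivNormOneProdSpecial σ hL hdet (Classical.arbitrary ι)),
    Nat.card_prod]

end UnitaryGroup

namespace IsLocalRing

variable {R : Type*} [CommRing R] [IsLocalRing R]

theorem isUnit_one_add_of_sub_one_mem (h2 : IsUnit (2 : R)) {x : R}
    (hx : x - 1 ∈ maximalIdeal R) : IsUnit (1 + x) := by
  refine notMem_maximalIdeal.mp fun h => notMem_maximalIdeal.mpr h2 ?_
  have h2' : 1 + x - (x - 1) = 2 := by ring
  simpa only [h2'] using sub_mem h hx

theorem add_one_notMem_of_sub_one_mem (h2 : IsUnit (2 : R)) {x : R}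
    (hx : x - 1 ∈ maximalIdeal R) : x + 1 ∉ maximalIdeal R := by
  rw [add_comm]
  exact notMem_maximalIdeal.mpr (isUnit_one_add_of_sub_one_mem h2 hx)

theorem isUnit_one_sub_mul_of_mem {a : R} (ha : a ∈ maximalIdeal R) (x : R) :
    IsUnit (1 - a * x) :=
  isUnit_one_sub_self_of_mem_nonunits _ ((mem_maximalIdeal _).mp (Ideal.mul_mem_right _ _ ha))

end IsLocalRing

namespace QuadraticAlgebra

variable {R : Type*} [CommRing R] [IsLocalRing R] {a : R}

theorem re_sub_one_mem_or_re_add_one_mem (ha : a ∈ maximalIdeal R)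
    {z : QuadraticAlgebra R a 0} (hz : z.norm = 1) :
    z.re - 1 ∈ maximalIdeal R ∨ z.re + 1 ∈ maximalIdeal R := by
  have hprod : (z.re - 1) * (z.re + 1) = a * (z.im * z.im) := by
    rw [norm_def] at hz
    linear_combination hz
  refine (maximalIdeal.isMaximal R).isPrime.mem_or_mem ?_
  rw [hprod]
  exact Ideal.mul_mem_right _ _ ha

theorem neg_re_sub_one_mem_iff {z : QuadraticAlgebra R a 0} :
    (-z).re - 1 ∈ maximalIdeal R ↔ z.re + 1 ∈ maximalIdeal R := by
  rw [re_neg, ← neg_add', Ideal.neg_mem_iff]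

variable (a) in
abbrev normOneNearOne : Type _ :=
  {z : QuadraticAlgebra R a 0 // z.norm = 1 ∧ z.re - 1 ∈ maximalIdeal R}

/-- The Cayley transform `t ↦ (1 + tω) / (1 - tω) = ((1 + at²) + 2tω) / (1 - at²)`. -/
noncomputable def cayley (h2 : IsUnit (2 : R)) (ha : a ∈ maximalIdeal R) :
    R ≃ normOneNearOne (R := R) a where
  toFun t :=
    let u := Ring.inverse (1 - a * t ^ 2)
    have hu : (1 - a * t ^ 2) * u = 1 :=
      Ring.mul_inverse_cancel _ (isUnit_one_sub_mul_of_mem ha _)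
    ⟨⟨(1 + a * t ^ 2) * u, 2 * t * u⟩, by
      rw [norm_def]; linear_combination (1 + (1 - a * t ^ 2) * u) * hu, by
      have : (1 + a * t ^ 2) * u - 1 = a * (2 * t ^ 2 * u) := by linear_combination hu
      rw [this]; exact Ideal.mul_mem_right _ _ ha⟩
  invFun z := z.1.im * Ring.inverse (1 + z.1.re)
  left_inv t := by
    dsimp only
    set u := Ring.inverse (1 - a * t ^ 2)
    have hu : (1 - a * t ^ 2) * u = 1 :=
      Ring.mul_inverse_cancel _ (isUnit_one_sub_mul_of_mem ha _)
    have hre : 1 + (1 + a * t ^ 2) * u = 2 * u := by linear_combination -hu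
    have hv := Ring.mul_inverse_cancel _
      (hre ▸ h2.mul (isUnit_ringInverse.mpr (IsUnit.of_mul_eq_one _ hu)))
    linear_combination t * hv + t * Ring.inverse (1 + (1 + a * t ^ 2) * u) * hu
  right_inv := by
    rintro ⟨⟨x, y⟩, hz, hx⟩
    rw [norm_def] at hz
    dsimp only at hz hx
    set v := Ring.inverse (1 + x)
    have hv : (1 + x) * v = 1 := Ring.mul_inverse_cancel _ (isUnit_one_add_of_sub_one_mem h2 hx)
    have hden : 1 - a * (y * v) ^ 2 = 2 * v := by
      linear_combination v ^ 2 * hz - (1 - v + x * v) * hv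
    have hu := Ring.mul_inverse_cancel _ (isUnit_one_sub_mul_of_mem ha ((y * v) ^ 2))
    set u := Ring.inverse (1 - a * (y * v) ^ 2)
    refine Subtype.ext (QuadraticAlgebra.ext ?_ ?_)
    · linear_combination x * hu - 2 * u * hv - (1 + x) * u * hden
    · linear_combination y * hu - y * u * hden

open Classical in
/-- `true` records `z ≡ 1`; `false` records `z ≡ -1`, and then `-z` is stored. -/
noncomputable def normOneEquivProdBool (h2 : IsUnit (2 : R)) (ha : a ∈ maximalIdeal R) :
    {z : QuadraticAlgebra R a 0 // z.norm = 1} ≃ normOneNearOne a × Bool where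
  toFun z :=
    if h : z.1.re - 1 ∈ maximalIdeal R then (⟨z, z.2, h⟩, true)
    else (⟨-z, by rw [norm_neg, z.2], neg_re_sub_one_mem_iff.mpr
      ((re_sub_one_mem_or_re_add_one_mem ha z.2).resolve_left h)⟩, false)
  invFun w := ⟨if w.2 then w.1.1 else -w.1.1, by split_ifs <;> simp [w.1.2.1]⟩
  left_inv z := by
    by_cases h : z.1.re - 1 ∈ maximalIdeal R <;> simp [h]
  right_inv := by
    rintro ⟨⟨w, -, hre⟩, _ | _⟩
    · have : -w.re - 1 ∉ maximalIdeal R := by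
        rw [← re_neg, neg_re_sub_one_mem_iff]
        exact add_one_notMem_of_sub_one_mem h2 hre
      simp [this, -mem_maximalIdeal]
    · simp [hre]

theorem card_norm_eq_one (h2 : IsUnit (2 : R)) (ha : a ∈ maximalIdeal R) :
    Nat.card {z : QuadraticAlgebra R a 0 // z.norm = 1} = 2 * Nat.card R := by
  rw [Nat.card_congr ((normOneEquivProdBool h2 ha).trans ((cayley h2 ha).symm.prodCongr
    (Equiv.refl Bool))), Nat.card_prod, Nat.card_eq_fintype_card (α := Bool), Fintype.card_bool,
    mul_comm]

end QuadraticAlgebra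

namespace Zsqrtd

variable (e : ℤ) (M : ℕ)

noncomputable def toQuadraticAlgebraZMod : ℤ√e →+* QuadraticAlgebra (ZMod M) e 0 :=
  lift ⟨QuadraticAlgebra.omega, by ext <;> simp [QuadraticAlgebra.omega_mul_omega_eq_mk]⟩

variable {e M}

theorem toQuadraticAlgebraZMod_apply (z : ℤ√e) :
    toQuadraticAlgebraZMod e M z = ⟨z.re, z.im⟩ := by
  ext <;> simp [toQuadraticAlgebraZMod]

theorem toQuadraticAlgebraZMod_star (z : ℤ√e) :
    toQuadraticAlgebraZMod e M (star z) = star (toQuadraticAlgebraZMod e M z) := by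
  ext <;> simp [toQuadraticAlgebraZMod_apply]

variable (e M)

theorem toQuadraticAlgebraZMod_surjective :
    Function.Surjective (toQuadraticAlgebraZMod e M) := by
  rintro ⟨x, y⟩
  obtain ⟨a, rfl⟩ := ZMod.intCast_surjective x
  obtain ⟨b, rfl⟩ := ZMod.intCast_surjective y
  exact ⟨⟨a, b⟩, toQuadraticAlgebraZMod_apply _⟩

theorem ker_toQuadraticAlgebraZMod :
    RingHom.ker (toQuadraticAlgebraZMod e M) = Ideal.span {((M : ℤ) : ℤ√e)} := by
  ext z
  rw [RingHom.mem_ker, Ideal.mem_span_singleton, intCast_dvd, toQuadraticAlgebraZMod_apply,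
    QuadraticAlgebra.ext_iff]
  simp [ZMod.intCast_zmod_eq_zero_iff_dvd]

noncomputable def quotientSpanIntCastEquiv :
    ℤ√e ⧸ Ideal.span {((M : ℤ) : ℤ√e)} ≃+* QuadraticAlgebra (ZMod M) e 0 :=
  (Ideal.quotEquivOfEq (ker_toQuadraticAlgebraZMod e M).symm).trans
    (RingHom.quotientKerEquivOfSurjective (toQuadraticAlgebraZMod_surjective e M))

variable {e M}

theorem quotientSpanIntCastEquiv_mk (z : ℤ√e) :
    quotientSpanIntCastEquiv e M (Ideal.Quotient.mk _ z) = toQuadraticAlgebraZMod e M z :=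
  rfl

end Zsqrtd

theorem conjQ_mk (d m : ℤ) (z : ℤ√(-d)) :
    conjQ d m (Ideal.Quotient.mk _ z) = Ideal.Quotient.mk _ (star z) :=
  Ideal.quotientMap_mk

theorem quotientSpanIntCastEquiv_conjQ (d : ℤ) (M : ℕ) (u : Rq d M) :
    Zsqrtd.quotientSpanIntCastEquiv (-d) M (conjQ d M u) =
      star (Zsqrtd.quotientSpanIntCastEquiv (-d) M u) := by
  obtain ⟨z, rfl⟩ := Ideal.Quotient.mk_surjective u
  rw [conjQ_mk, Zsqrtd.quotientSpanIntCastEquiv_mk, Zsqrtd.quotientSpanIntCastEquiv_mk,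
    Zsqrtd.toQuadraticAlgebraZMod_star]

theorem card_mul_conjQ_eq_one (d : ℤ) (M : ℕ) :
    Nat.card {u : Rq d M // u * conjQ d M u = 1} =
      Nat.card {z : QuadraticAlgebra (ZMod M) (-d : ℤ) 0 // z.norm = 1} := by
  refine Nat.card_congr ((Zsqrtd.quotientSpanIntCastEquiv (-d) M).toEquiv.subtypeEquiv
    fun u => ?_)
  rw [← map_eq_one_iff _ (Zsqrtd.quotientSpanIntCastEquiv (-d) M).injective, map_mul,
    quotientSpanIntCastEquiv_conjQ, ← QuadraticAlgebra.algebraMap_norm_eq_mul_star,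
    map_eq_one_iff _ QuadraticAlgebra.algebraMap_injective]
  rfl

instance ZMod.isLocalRing_prime_pow (p : ℕ) [Fact p.Prime] (k : ℕ) [NeZero k] :
    IsLocalRing (ZMod (p ^ k)) :=
  have : Nontrivial (ZMod (p ^ k)) :=
    ZMod.nontrivial_iff.mpr (Nat.one_lt_pow (NeZero.ne k) (Fact.out : p.Prime).one_lt).ne'
  IsLocalRing.of_surjective' (PadicInt.toZModPow k) (ZMod.ringHom_surjective _)

theorem ZMod.isUnit_two_prime_pow {p : ℕ} (hp : p.Prime) (hp2 : p ≠ 2) {k : ℕ} [NeZero k] :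
    IsUnit (2 : ZMod (p ^ k)) := by
  have := (ZMod.isUnit_natCast_iff_not_dvd_pow (a := 2) hp (Nat.pos_of_ne_zero (NeZero.ne k))).mpr
    fun h => hp2 ((Nat.prime_dvd_prime_iff_eq hp Nat.prime_two).mp h)
  exact_mod_cast this

theorem ZMod.intCast_mem_maximalIdeal_prime_pow {p : ℕ} [Fact p.Prime] {k : ℕ} [NeZero k]
    {a : ℤ} (ha : (p : ℤ) ∣ a) : (a : ZMod (p ^ k)) ∈ maximalIdeal (ZMod (p ^ k)) := by
  obtain ⟨c, rfl⟩ := ha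
  push_cast
  exact Ideal.mul_mem_right _ _ ((mem_maximalIdeal _).mpr
    (ZMod.prime_natCast_not_isUnit_pow Fact.out (Nat.pos_of_ne_zero (NeZero.ne k))))

theorem isDiag_Lmat (R : Type*) [Ring R] (n : ℕ) : (Lmat R n).IsDiag :=
  isDiag_diagonal _

theorem isUnit_det_Lmat (R : Type*) [CommRing R] (n : ℕ) : IsUnit (Lmat R n).det := by
  simp [Lmat, det_diagonal]

theorem card_U_eq_index_mul_card_SU_ramified_general (d : ℤ) (n : ℕ) (p : ℕ) (hp : p.Prime)
    (hp2 : p ≠ 2) (hpd : (p : ℤ) ∣ d) (k : ℕ) (hk : 1 ≤ k) :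
    Nat.card {A : Matrix (Fin (n + 1)) (Fin (n + 1)) (Rq d (p ^ k)) //
        A * Lmat (Rq d (p ^ k)) n * (A.map (conjQ d (p ^ k)))ᵀ = Lmat (Rq d (p ^ k)) n}
      = 2 * p ^ k *
        Nat.card {A : Matrix (Fin (n + 1)) (Fin (n + 1)) (Rq d (p ^ k)) //
          A * Lmat (Rq d (p ^ k)) n * (A.map (conjQ d (p ^ k)))ᵀ = Lmat (Rq d (p ^ k)) n ∧
          A.det = 1} := by
  have : Fact p.Prime := ⟨hp⟩
  have : NeZero k := ⟨by omega⟩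
  have hpk : (p : ℤ) ^ k = ((p ^ k : ℕ) : ℤ) := by norm_cast
  have hd : ((-d : ℤ) : ZMod (p ^ k)) ∈ maximalIdeal (ZMod (p ^ k)) :=
    ZMod.intCast_mem_maximalIdeal_prime_pow (dvd_neg.mpr hpd)
  rw [hpk,
    card_unitary_eq_card_normOne_mul_card_special _ (isDiag_Lmat _ n) (isUnit_det_Lmat _ n),
    card_mul_conjQ_eq_one, QuadraticAlgebra.card_norm_eq_one
      (ZMod.isUnit_two_prime_pow hp hp2) hd, Nat.card_zmod]

/-- Ramified index formula: over `R = ℤ[√-d]/(p^k)` with `p` an odd prime dividing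
`d`, `#U(L,R) = 2·p^k · #SU(L,R)`. -/
theorem card_U_eq_index_mul_card_SU_ramified (d : ℤ) (hd : 0 < d) (hodd : Odd d)
    (hsf : Squarefree d) (n : ℕ) (hn : 1 ≤ n) (p : ℕ) (hp : p.Prime) (hp2 : p ≠ 2)
    (hpd : (p : ℤ) ∣ d) (k : ℕ) (hk : 1 ≤ k) :
    Nat.card {A : Matrix (Fin (n + 1)) (Fin (n + 1)) (Rq d (p ^ k)) //
        A * Lmat (Rq d (p ^ k)) n * (A.map (conjQ d (p ^ k)))ᵀ = Lmat (Rq d (p ^ k)) n}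
      = 2 * p ^ k *
        Nat.card {A : Matrix (Fin (n + 1)) (Fin (n + 1)) (Rq d (p ^ k)) //
          A * Lmat (Rq d (p ^ k)) n * (A.map (conjQ d (p ^ k)))ᵀ = Lmat (Rq d (p ^ k)) n ∧
          A.det = 1} :=
  card_U_eq_index_mul_card_SU_ramified_general d n p hp hp2 hpd k hk
end
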